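/- arXiv:2405.12349 — 2 statements merged into one kernel-verified Lean document; each statement's English description precedes it below -/
import Mathlib

section
/- Suppose A₀,Bᵢ,Cⱼ ∈ ℂ satisfy B₀ = B₂, B₁ = B₃, C₁ = C₅, C₃ = C₁ + C₅, C₀ + C₄ = C₂ + C₆, and C₀ + 2C₆ = C₄. If (x₀,y₀) ∈ ℂ² with x₀² + y₀² ≠ 0 satisfies the sextic A₀(x₀²+y₀²)² + (B₀y₀³−B₁x₀y₀²+B₂x₀²y₀−B₃x₀³)(x₀²+y₀²) + (C₀y₀⁶−C₁x₀y₀⁵+C₂x₀²y₀⁴−C₃x₀³y₀³+C₄x₀⁴y₀²−C₅x₀⁵y₀+C₆x₀⁶) = 0, then it satisfies the conic A₀ + B₀y₀ − B₁x₀ + C₆x₀² − C₅x₀y₀ + C₀y₀² = 0. -/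
/-- Under the stated degenerations of the coefficients, the central sextic
locus reduces to a conic away from the isotropic locus. -/
theorem sextic_degenerates_to_conic
    (A₀ B₀ B₁ B₂ B₃ C₀ C₁ C₂ C₃ C₄ C₅ C₆ : ℂ)
    (hB0 : B₀ = B₂) (hB1 : B₁ = B₃) (hC1 : C₁ = C₅)
    (hC3 : C₃ = C₁ + C₅) (hC04 : C₀ + C₄ = C₂ + C₆) (hC : C₀ + 2 * C₆ = C₄)
    (x₀ y₀ : ℂ) (hiso : x₀ ^ 2 + y₀ ^ 2 ≠ 0)
    (hsex : A₀ * (x₀ ^ 2 + y₀ ^ 2) ^ 2 +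
      (B₀ * y₀ ^ 3 - B₁ * x₀ * y₀ ^ 2 + B₂ * x₀ ^ 2 * y₀ - B₃ * x₀ ^ 3) *
        (x₀ ^ 2 + y₀ ^ 2) +
      (C₀ * y₀ ^ 6 - C₁ * x₀ * y₀ ^ 5 + C₂ * x₀ ^ 2 * y₀ ^ 4 -
        C₃ * x₀ ^ 3 * y₀ ^ 3 + C₄ * x₀ ^ 4 * y₀ ^ 2 - C₅ * x₀ ^ 5 * y₀ +
        C₆ * x₀ ^ 6) = 0) :
    A₀ + B₀ * y₀ - B₁ * x₀ + C₆ * x₀ ^ 2 - C₅ * x₀ * y₀ + C₀ * y₀ ^ 2 = 0 := by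
  have key : (A₀ + B₀ * y₀ - B₁ * x₀ + C₆ * x₀ ^ 2 - C₅ * x₀ * y₀ + C₀ * y₀ ^ 2) *
      (x₀ ^ 2 + y₀ ^ 2) ^ 2 = 0 := by
    subst hB0 hB1 hC1 hC3 hC
    linear_combination hsex + x₀ ^ 2 * y₀ ^ 4 * hC04
  exact (mul_eq_zero.mp key).resolve_right (pow_ne_zero 2 hiso)
end

section
/- Let y : ℂ² → ℂ³ be smooth (parametric vector equation of a surface in affine chart), and suppose y satisfies y_{xu} = cy + a y_x + b y_u, y_{xx} = p y + α y_x + β y_u, y_{uu} = q y + r y_x + s y_u for scalar functions a,b,c,p,q,r,s,α,β. If u = u(x) is a curve with y, y′, y″ linearly dependent (det(y, y′, y″) = 0) where y′ = y_x + y_u u′ and y″ = y_{xx} + 2y_{xu}u′ + y_{uu}u′² + y_u u″, and y, y_x, y_u are linearly independent at each point, then u″ = −β + (α − 2b)u′ − (s − 2a)u′² + r·u′³. -/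
/-- Differential equation of the straight lines on a plane surface: pointwise
version.  Given the second-order data of the surface satisfying the completely
integrable system `y_{xu} = cy + a y_x + b y_u`, `y_{xx} = p y + α y_x + β y_u`,
`y_{uu} = q y + r y_x + s y_u`, a curve along which `y, y′, y″` are linearly
dependent satisfies `u″ = −β + (α − 2b)u′ − (s − 2a)u′² + r u′³`. -/
theorem straight_lines_projective_connection
    (y yx yu yxx yxu yuu : Fin 3 → ℂ)
    (a b c p q r s α β : ℂ)
    (hxu : yxu = c • y + a • yx + b • yu)
    (hxx : yxx = p • y + α • yx + β • yu)
    (huu : yuu = q • y + r • yx + s • yu)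
    (hind : LinearIndependent ℂ ![y, yx, yu])
    (u' u'' : ℂ) (y' y'' : Fin 3 → ℂ)
    (hy' : y' = yx + u' • yu)
    (hy'' : y'' = yxx + (2 * u') • yxu + (u' ^ 2) • yuu + u'' • yu)
    (hdet : (Matrix.of ![y, y', y'']).det = 0) :
    u'' = -β + (α - 2 * b) * u' - (s - 2 * a) * u' ^ 2 + r * u' ^ 3 := by
  obtain ⟨v, hv0, hvM⟩ := Matrix.exists_vecMul_eq_zero_iff.mpr hdet
  have hcomb : (v 0 + v 2 * (p + 2 * u' * c + u' ^ 2 * q)) • y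
      + (v 1 + v 2 * (α + 2 * u' * a + u' ^ 2 * r)) • yx
      + (v 1 * u' + v 2 * (β + 2 * u' * b + u' ^ 2 * s + u'')) • yu = 0 := by
    funext j
    have h := congrFun hvM j
    simp only [Matrix.vecMul, dotProduct, Fin.sum_univ_three, Matrix.of_apply,
      Matrix.cons_val_zero, Matrix.cons_val_one, Matrix.head_cons,
      Matrix.cons_val_two, Matrix.tail_cons, hy', hy'', hxu, hxx, huu,
      Pi.add_apply, Pi.smul_apply, smul_eq_mul, Pi.zero_apply] at h
    simp only [Pi.add_apply, Pi.smul_apply, smul_eq_mul, Pi.zero_apply]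
    linear_combination h
  have hli := Fintype.linearIndependent_iff.mp hind
    ![v 0 + v 2 * (p + 2 * u' * c + u' ^ 2 * q),
      v 1 + v 2 * (α + 2 * u' * a + u' ^ 2 * r),
      v 1 * u' + v 2 * (β + 2 * u' * b + u' ^ 2 * s + u'')]
    (by simpa [Fin.sum_univ_three] using hcomb)
  have h0 := hli 0
  have h1 := hli 1
  have h2 := hli 2
  simp only [Matrix.cons_val_zero, Matrix.cons_val_one, Matrix.head_cons,
    Matrix.cons_val_two, Matrix.tail_cons] at h0 h1 h2
  by_cases hv2 : v 2 = 0
  · exfalso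
    apply hv0
    have hv1 : v 1 = 0 := by
      linear_combination h1 - (α + 2 * u' * a + u' ^ 2 * r) * hv2
    have hv00 : v 0 = 0 := by
      linear_combination h0 - (p + 2 * u' * c + u' ^ 2 * q) * hv2
    funext i
    fin_cases i <;> simp [hv00, hv1, hv2]
  · have key : v 2 * ((β + 2 * u' * b + u' ^ 2 * s + u'')
        - (α + 2 * u' * a + u' ^ 2 * r) * u') = 0 := by
      linear_combination h2 - u' * h1
    rcases mul_eq_zero.mp key with h | h
    · exact absurd h hv2
    · linear_combination h
end
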